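/- Let G be a connected chordal graph and S a clique of G with V(G) ∖ S nonempty. Then every connected component of G − S contains a simplicial vertex of G. -/

import Mathlib

open SimpleGraph

/-- A graph is chordal if every cycle of length at least 4 has a chord:
an edge between two vertices of the cycle that is not an edge of the cycle. -/
def Chordal {V : Type*} (G : SimpleGraph V) : Prop :=
  ∀ ⦃v : V⦄ (c : G.Walk v v), c.IsCycle → 4 ≤ c.length →
    ∃ x y, x ∈ c.support ∧ y ∈ c.support ∧ G.Adj x y ∧ s(x, y) ∉ c.edges

/-- The underlying relation of the `k`-sun: `Sum.inr` vertices form the clique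
`{y_1, …, y_k}`, `Sum.inl` vertices form the independent set `{x_1, …, x_k}`,
and `x_i` is adjacent exactly to `y_i` and `y_{(i mod k)+1}`. -/
def sunRel (k : ℕ) : (Fin k ⊕ Fin k) → (Fin k ⊕ Fin k) → Prop
  | Sum.inr _, Sum.inr _ => True
  | Sum.inl i, Sum.inr j => j.val = i.val ∨ j.val = (i.val + 1) % k
  | _, _ => False

/-- The `k`-sun graph. -/
def sunGraph (k : ℕ) : SimpleGraph (Fin k ⊕ Fin k) := SimpleGraph.fromRel (sunRel k)

/-- A graph is strongly chordal if it is chordal and has no induced `k`-sun for `k ≥ 3`. -/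
def StronglyChordal {V : Type*} (G : SimpleGraph V) : Prop :=
  Chordal G ∧ ∀ k, 3 ≤ k → IsEmpty (sunGraph k ↪g G)

/-- The graph obtained from `G` by adding a universal vertex (`none`). -/
def addUniversal {V : Type*} (G : SimpleGraph V) : SimpleGraph (Option V) :=
  SimpleGraph.fromRel (fun x y =>
    match x, y with
    | some a, some b => G.Adj a b
    | _, _ => True)

/-- The graph obtained from `G` by adding a true twin (`none`) of the vertex `u`. -/
def addTwin {V : Type*} (G : SimpleGraph V) (u : V) : SimpleGraph (Option V) :=
  SimpleGraph.fromRel (fun x y =>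
    match x, y with
    | some a, some b => G.Adj a b
    | none, some a => a = u ∨ G.Adj u a
    | some a, none => a = u ∨ G.Adj u a
    | none, none => False)

/-- A vertex is simplicial if its neighborhood is a clique. -/
def IsSimplicial {V : Type*} (G : SimpleGraph V) (v : V) : Prop :=
  ∀ ⦃a b : V⦄, G.Adj v a → G.Adj v b → a ≠ b → G.Adj a b

/-- `Q` is (the vertex set of) a connected component of `G − A`. -/
def IsCompOf {V : Type*} (G : SimpleGraph V) (A Q : Set V) : Prop :=
  Disjoint Q A ∧ (G.induce Q).Connected ∧
    ∀ a ∈ Q, ∀ b, b ∉ A → G.Adj a b → b ∈ Q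

/-- The set of neighbors of a vertex set `Q`: vertices outside `Q` adjacent to some
vertex of `Q`. -/
def setNbhd {V : Type*} (G : SimpleGraph V) (Q : Set V) : Set V :=
  {b | b ∉ Q ∧ ∃ a ∈ Q, G.Adj a b}

/-- A cycle `c` is extendable if there is a cycle whose vertex set consists of the
vertices of `c` together with exactly one additional vertex. -/
def CycleExtendable {V : Type*} (G : SimpleGraph V) {v : V} (c : G.Walk v v) : Prop :=
  ∃ (w : V) (u : V) (c' : G.Walk u u), c'.IsCycle ∧ w ∉ c.support ∧
    ∀ y, y ∈ c'.support ↔ (y ∈ c.support ∨ y = w)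

/-! Induction on `|Q|`. If `Q` together with its neighbourhood `N(Q) ⊆ S` is a clique, every
vertex of `Q` is simplicial. Otherwise there are nonadjacent `x ∈ Q` and `y ∈ Q ∪ N(Q)` with
`N(Q)` inside the closed neighbourhood of `y`. A minimal `x`–`y` separator `A` is a clique
(Dirac): two nonadjacent vertices of `A` both have neighbours in the components of `x` and of
`y`, and shortest paths through these components close a chordless cycle of length at least 4.
The component of `x` in `G - A` is a proper subset of `Q`, and the induction applies to it. -/

section

variable {V : Type*} {G : SimpleGraph V}

namespace SimpleGraph

variable {T : Set V} {u v : V}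

/-- Unlike `G.induce T`, this graph lives on `V` itself, so its walks are walks of `G` up to
`Walk.mapLe`, with no subtype coercions. -/
def restrict (G : SimpleGraph V) (T : Set V) : SimpleGraph V where
  Adj u v := G.Adj u v ∧ u ∈ T ∧ v ∈ T
  symm := ⟨fun _ _ h => ⟨h.1.symm, h.2.2, h.2.1⟩⟩
  loopless := ⟨fun _ h => h.1.ne rfl⟩

@[simp]
lemma restrict_adj : (G.restrict T).Adj u v ↔ G.Adj u v ∧ u ∈ T ∧ v ∈ T := Iff.rfl

lemma restrict_le (T : Set V) : G.restrict T ≤ G := fun _ _ h => h.1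

lemma restrict_mono {T' : Set V} (h : T ⊆ T') : G.restrict T ≤ G.restrict T' :=
  fun _ _ huv => ⟨huv.1, h huv.2.1, h huv.2.2⟩

lemma Reachable.mem_of_adj_closed {P : Set V} (h : G.Reachable u v) (hu : u ∈ P)
    (hP : ∀ ⦃w z⦄, w ∈ P → G.Adj w z → z ∈ P) : v ∈ P := by
  obtain ⟨p⟩ := h
  induction p with
  | nil => exact hu
  | cons h _ ih => exact ih (hP hu h)

lemma Reachable.induce_of_restrict (h : (G.restrict T).Reachable u v) (hu : u ∈ T) :
    ∃ hv : v ∈ T, (G.induce T).Reachable ⟨u, hu⟩ ⟨v, hv⟩ := by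
  refine h.mem_of_adj_closed
    (P := {w | ∃ hw : w ∈ T, (G.induce T).Reachable ⟨u, hu⟩ ⟨w, hw⟩}) ⟨hu, Reachable.rfl⟩ ?_
  rintro w z ⟨hw, huw⟩ ⟨hwz, -, hz⟩
  exact ⟨hz, huw.trans (Adj.reachable (G := G.induce T) (by simpa using hwz))⟩

namespace Walk

lemma mem_of_mem_support_restrict (p : (G.restrict T).Walk u v) (hu : u ∈ T) :
    ∀ w ∈ p.support, w ∈ T := by
  induction p with
  | nil => simpa using hu
  | cons h _ ih =>
    rintro w (_ | ⟨_, hw⟩)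
    exacts [hu, ih h.2.2 w hw]

lemma one_lt_length_of_not_adj (p : G.Walk u v) (hne : u ≠ v) (hadj : ¬ G.Adj u v) :
    1 < p.length := by
  by_contra! h
  interval_cases hp : p.length
  exacts [hne (eq_of_length_eq_zero hp), hadj (adj_of_length_eq_one hp)]

lemma mem_edges_of_length_eq_one (p : G.Walk u v) (hp : p.length = 1) : s(u, v) ∈ p.edges := by
  cases p with
  | nil => simp at hp
  | cons h q =>
    obtain rfl := eq_of_length_eq_zero (p := q) (by simpa using hp)
    simp

theorem isChordless_of_length_eq_dist (p : G.Walk u v) (hp : p.length = G.dist u v) :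
    p.IsChordless := by
  classical
  rw [isChordless_iff_forall_mem_edges]
  intro x y hx hy hxy
  have hsub : (p.takeUntil x hx).append (p.dropUntil x hx) = p := p.take_spec hx
  rcases (mem_support_append_iff _ _).mp (hsub ▸ hy) with hyt | hyd
  · set q := (p.takeUntil x hx).dropUntil y hyt
    have hq : q.IsSubwalk p := ((p.takeUntil x hx).isSubwalk_dropUntil hyt).trans
      (p.isSubwalk_takeUntil hx)
    have hlen : q.length = 1 := by
      rw [length_eq_dist_of_subwalk hp hq, dist_eq_one_iff_adj]; exact hxy.symm
    simpa [Sym2.eq_swap] using hq.edges_subset (q.mem_edges_of_length_eq_one hlen)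
  · set q := (p.dropUntil x hx).takeUntil y hyd
    have hq : q.IsSubwalk p := ((p.dropUntil x hx).isSubwalk_takeUntil hyd).trans
      (p.isSubwalk_dropUntil hx)
    have hlen : q.length = 1 := by
      rw [length_eq_dist_of_subwalk hp hq, dist_eq_one_iff_adj]; exact hxy
    exact hq.edges_subset (q.mem_edges_of_length_eq_one hlen)

lemma IsChordless.mapLe_restrict {p : (G.restrict T).Walk u v} (hp : p.IsChordless)
    (hu : u ∈ T) : (p.mapLe (restrict_le T)).IsChordless := by
  rw [isChordless_iff_forall_mem_edges] at hp ⊢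
  simp only [support_mapLe_eq_support, edges_mapLe_eq_edges]
  intro x y hx hy hxy
  have hT := p.mem_of_mem_support_restrict hu
  exact hp hx hy ⟨hxy, hT x hx, hT y hy⟩

end Walk

lemma Reachable.exists_isPath_isChordless_of_restrict (h : (G.restrict T).Reachable u v)
    (hu : u ∈ T) :
    ∃ p : G.Walk u v, p.IsPath ∧ p.IsChordless ∧ ∀ w ∈ p.support, w ∈ T := by
  obtain ⟨p, hp⟩ := h.exists_walk_length_eq_dist
  refine ⟨p.mapLe (restrict_le T), ?_, ?_, ?_⟩
  · exact (Walk.isPath_mapLe _).mpr (p.isPath_of_length_eq_dist hp)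
  · exact (p.isChordless_of_length_eq_dist hp).mapLe_restrict hu
  · simpa [Walk.support_mapLe_eq_support] using p.mem_of_mem_support_restrict hu

end SimpleGraph

/-- Shortest `a`–`b` paths through `X` and through `Y` close a cycle of length at least 4; a
chord inside one of them would shorten it, and a chord between them would join `X` to `Y`. -/
theorem Chordal.adj_of_reachable_through (hch : Chordal G) {a b : V} {X Y : Set V}
    (hab : a ≠ b) (hXY : Disjoint X Y) (hXYadj : ∀ x ∈ X, ∀ y ∈ Y, ¬ G.Adj x y)
    (hX : (G.restrict (insert a (insert b X))).Reachable a b)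
    (hY : (G.restrict (insert a (insert b Y))).Reachable a b) : G.Adj a b := by
  by_contra hnadj
  obtain ⟨p, hp, hpc, hpX⟩ := hX.exists_isPath_isChordless_of_restrict (by simp)
  obtain ⟨q, hq, hqc, hqY⟩ := hY.exists_isPath_isChordless_of_restrict (by simp)
  have hp_only : ∀ w ∈ p.support, w ∉ q.support → w ∈ X := by
    intro w hwp hwq
    rcases hpX w hwp with rfl | rfl | hw
    exacts [absurd q.start_mem_support hwq, absurd q.end_mem_support hwq, hw]
  have hq_only : ∀ w ∈ q.support, w ∉ p.support → w ∈ Y := by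
    intro w hwq hwp
    rcases hqY w hwq with rfl | rfl | hw
    exacts [absurd p.start_mem_support hwp, absurd p.end_mem_support hwp, hw]
  have hdisj : p.support.tail.Disjoint q.reverse.support.tail := by
    intro z hzp hzq
    have hza : z ≠ a := by
      rintro rfl
      have := hp.support_nodup
      rw [← p.cons_tail_support, List.nodup_cons] at this
      exact this.1 hzp
    have hzb : z ≠ b := by
      rintro rfl
      have := hq.reverse.support_nodup
      rw [← q.reverse.cons_tail_support, List.nodup_cons] at this
      exact this.1 hzq
    have hzX : z ∈ X := by simpa [hza, hzb] using hpX z (List.mem_of_mem_tail hzp)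
    have hzY : z ∈ Y := by
      simpa [hza, hzb] using hqY z (by simpa using List.mem_of_mem_tail hzq)
    exact hXY.ne_of_mem hzX hzY rfl
  have hcyc : (p.append q.reverse).IsCycle :=
    hp.isCycle_append hq.reverse hdisj (Or.inl (p.one_lt_length_of_not_adj hab hnadj))
  obtain ⟨u, v, hu, hv, huv, hchord⟩ := hch _ hcyc (by
    have := p.one_lt_length_of_not_adj hab hnadj
    have := q.one_lt_length_of_not_adj hab hnadj
    simp only [Walk.length_append, Walk.length_reverse]
    omega)
  have hnp : ¬ (u ∈ p.support ∧ v ∈ p.support) := fun h =>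
    hchord (Walk.edges_append _ _ ▸ List.mem_append_left _ (hpc.mem_edges h.1 h.2 huv))
  have hnq : ¬ (u ∈ q.support ∧ v ∈ q.support) := fun h =>
    hchord (Walk.edges_append _ _ ▸ List.mem_append_right _
      (by simpa using hqc.mem_edges h.1 h.2 huv))
  rw [Walk.mem_support_append_iff, Walk.support_reverse, List.mem_reverse] at hu hv
  by_cases hup : u ∈ p.support <;> by_cases hvp : v ∈ p.support
  · exact hnp ⟨hup, hvp⟩
  · have hvq : v ∈ q.support := hv.resolve_left hvp
    by_cases huq : u ∈ q.support
    · exact hnq ⟨huq, hvq⟩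
    · exact hXYadj u (hp_only u hup huq) v (hq_only v hvq hvp) huv
  · have huq : u ∈ q.support := hu.resolve_left hup
    by_cases hvq : v ∈ q.support
    · exact hnq ⟨huq, hvq⟩
    · exact hXYadj v (hp_only v hvp hvq) u (hq_only u huq hup) huv.symm
  · exact hnq ⟨hu.resolve_left hup, hv.resolve_left hvp⟩

namespace SimpleGraph

variable {A : Set V} {x y z w : V}

/-- The component of `x` in `G - A`; for `x ∈ A` it is the junk value `{x}`. -/
def componentAvoiding (G : SimpleGraph V) (A : Set V) (x : V) : Set V :=
  {z | (G.restrict Aᶜ).Reachable x z}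

def Separates (G : SimpleGraph V) (A : Set V) (x y : V) : Prop :=
  x ∉ A ∧ y ∉ A ∧ ¬ (G.restrict Aᶜ).Reachable x y

lemma self_mem_componentAvoiding : x ∈ G.componentAvoiding A x := Reachable.rfl

lemma notMem_of_mem_componentAvoiding (hx : x ∉ A) (hz : z ∈ G.componentAvoiding A x) :
    z ∉ A :=
  hz.mem_of_adj_closed (P := Aᶜ) hx fun _ _ _ h => h.2.2

lemma mem_componentAvoiding_of_adj (hx : x ∉ A) (hz : z ∈ G.componentAvoiding A x)
    (hw : w ∉ A) (hzw : G.Adj z w) : w ∈ G.componentAvoiding A x :=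
  Reachable.trans hz
    (restrict_adj.mpr ⟨hzw, notMem_of_mem_componentAvoiding hx hz, hw⟩).reachable

lemma reachable_restrict_componentAvoiding (hx : x ∉ A) (hz : z ∈ G.componentAvoiding A x) :
    (G.restrict (G.componentAvoiding A x)).Reachable x z := by
  set C := G.componentAvoiding A x
  refine (hz.mem_of_adj_closed (P := {w | w ∈ C ∧ (G.restrict C).Reachable x w})
    ⟨self_mem_componentAvoiding, Reachable.rfl⟩ ?_).2
  rintro w w' ⟨hw, hxw⟩ ⟨hww', -, hw'A⟩
  have hw' : w' ∈ C := mem_componentAvoiding_of_adj hx hw hw'A hww'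
  exact ⟨hw', hxw.trans (restrict_adj.mpr ⟨hww', hw, hw'⟩).reachable⟩

lemma isCompOf_componentAvoiding (hx : x ∉ A) : IsCompOf G A (G.componentAvoiding A x) := by
  refine ⟨Set.disjoint_left.mpr fun _ hz => notMem_of_mem_componentAvoiding hx hz, ?_,
    fun _ hz _ hw hzw => mem_componentAvoiding_of_adj hx hz hw hzw⟩
  rw [connected_iff_exists_forall_reachable]
  refine ⟨⟨x, self_mem_componentAvoiding⟩, fun ⟨z, hz⟩ => ?_⟩
  exact ((reachable_restrict_componentAvoiding hx hz).induce_of_restrict _).2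

lemma reachable_through_componentAvoiding {a b u v : V} (hx : x ∉ A)
    (hu : u ∈ G.componentAvoiding A x) (hv : v ∈ G.componentAvoiding A x)
    (hua : G.Adj u a) (hvb : G.Adj v b) :
    (G.restrict (insert a (insert b (G.componentAvoiding A x)))).Reachable a b := by
  set C := G.componentAvoiding A x
  have hle : G.restrict C ≤ G.restrict (insert a (insert b C)) :=
    restrict_mono fun _ hz => Or.inr (Or.inr hz)
  have hau : (G.restrict (insert a (insert b C))).Adj a u := by simp_all [hua.symm]
  have hvb : (G.restrict (insert a (insert b C))).Adj v b := by simp_all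
  have hux := ((reachable_restrict_componentAvoiding hx hu).mono hle).symm
  have hxv := (reachable_restrict_componentAvoiding hx hv).mono hle
  exact hau.reachable.trans (hux.trans hxv) |>.trans hvb.reachable

lemma separates_comm : G.Separates A x y ↔ G.Separates A y x := by
  simp only [Separates, reachable_comm (u := x)]
  tauto

lemma Separates.notMem_componentAvoiding (h : G.Separates A x y) :
    y ∉ G.componentAvoiding A x :=
  h.2.2

lemma Separates.not_adj (h : G.Separates A x y) {u v : V} (hu : u ∈ G.componentAvoiding A x)
    (hv : v ∈ G.componentAvoiding A y) : ¬ G.Adj u v := fun huv =>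
  h.notMem_componentAvoiding <| Reachable.trans
    (mem_componentAvoiding_of_adj h.1 hu (notMem_of_mem_componentAvoiding h.2.1 hv) huv) hv.symm

lemma Separates.disjoint_componentAvoiding (h : G.Separates A x y) :
    Disjoint (G.componentAvoiding A x) (G.componentAvoiding A y) :=
  Set.disjoint_left.mpr fun _ hzx hzy => h.2.2 (hzx.trans hzy.symm)

lemma separates_compl_pair (hxy : x ≠ y) (hadj : ¬ G.Adj x y) : G.Separates {x, y}ᶜ x y := by
  refine ⟨by simp, by simp, fun h => ?_⟩
  have : y ∈ ({x} : Set V) := h.mem_of_adj_closed rfl ?_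
  · exact hxy this.symm
  rintro w z rfl ⟨hwz, -, hz⟩
  simp only [compl_compl, Set.mem_insert_iff, Set.mem_singleton_iff] at hz
  rcases hz with rfl | rfl
  exacts [absurd hwz (G.loopless.irrefl _), absurd hwz hadj]

lemma exists_adj_of_minimal_separates (hA : Minimal (G.Separates · x y) A) {a : V}
    (ha : a ∈ A) : ∃ u ∈ G.componentAvoiding A x, G.Adj u a := by
  by_contra! hno
  have hsep : G.Separates (A \ {a}) x y := by
    refine ⟨fun h => hA.1.1 h.1, fun h => hA.1.2.1 h.1,
      fun h => hA.1.notMem_componentAvoiding ?_⟩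
    refine h.mem_of_adj_closed self_mem_componentAvoiding fun w z hw hwz => ?_
    have hza : z ≠ a := fun hza => hno w hw (hza ▸ hwz.1)
    exact mem_componentAvoiding_of_adj hA.1.1 hw (fun hzA => hwz.2.2 ⟨hzA, hza⟩) hwz.1
  exact (hA.2 hsep Set.sdiff_subset ha).2 rfl

end SimpleGraph

theorem Chordal.isClique_of_minimal_separates (hch : Chordal G) {A : Set V} {x y : V}
    (hA : Minimal (G.Separates · x y) A) : G.IsClique A := by
  have hA' : Minimal (G.Separates · y x) A := by simpa only [separates_comm] using hA
  intro a ha b hb hab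
  obtain ⟨ua, hua, huaa⟩ := exists_adj_of_minimal_separates hA ha
  obtain ⟨ub, hub, hubb⟩ := exists_adj_of_minimal_separates hA hb
  obtain ⟨va, hva, hvaa⟩ := exists_adj_of_minimal_separates hA' ha
  obtain ⟨vb, hvb, hvbb⟩ := exists_adj_of_minimal_separates hA' hb
  exact hch.adj_of_reachable_through hab hA.1.disjoint_componentAvoiding
    (fun _ hu _ hv => hA.1.not_adj hu hv)
    (reachable_through_componentAvoiding hA.1.1 hua hub huaa hubb)
    (reachable_through_componentAvoiding hA.1.2.1 hva hvb hvaa hvbb)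

lemma neighborSet_subset_union_setNbhd {Q : Set V} {v : V} (hv : v ∈ Q) :
    G.neighborSet v ⊆ Q ∪ setNbhd G Q := fun w hw => by
  by_cases hwQ : w ∈ Q
  exacts [Or.inl hwQ, Or.inr ⟨hwQ, v, hv, hw⟩]

lemma isSimplicial_of_neighborSet_subset {K : Set V} {v : V} (hK : G.IsClique K)
    (h : G.neighborSet v ⊆ K) : IsSimplicial G v :=
  fun _ _ ha hb hab => hK (h ha) (h hb) hab

lemma componentAvoiding_ssubset {Q A : Set V} {x y : V} (hx : x ∈ Q)
    (hy : y ∈ Q ∪ setNbhd G Q) (hyN : ∀ s ∈ setNbhd G Q, s = y ∨ G.Adj s y)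
    (hA : G.Separates A x y) : G.componentAvoiding A x ⊂ Q := by
  set C := G.componentAvoiding A x
  have hyC : ∀ {s}, s ∈ C → (s = y ∨ G.Adj s y) → False := by
    rintro s hs (rfl | hsy)
    exacts [hA.notMem_componentAvoiding hs,
      hA.notMem_componentAvoiding (mem_componentAvoiding_of_adj hA.1 hs hA.2.1 hsy)]
  refine ⟨fun z hz => ?_, fun hQC => ?_⟩
  · refine (hz.mem_of_adj_closed (P := C ∩ Q) ⟨self_mem_componentAvoiding, hx⟩ ?_).2
    rintro w w' ⟨hwC, hwQ⟩ ⟨hww', -, hw'A⟩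
    have hw'C : w' ∈ C := mem_componentAvoiding_of_adj hA.1 hwC hw'A hww'
    exact ⟨hw'C, by_contra fun hw'Q => hyC hw'C (hyN w' ⟨hw'Q, w, hwQ, hww'⟩)⟩
  · rcases hy with hyQ | ⟨-, q, hq, hqy⟩
    exacts [hyC (hQC hyQ) (Or.inl rfl), hyC (hQC hq) (Or.inr hqy)]

namespace IsCompOf

variable {S Q : Set V}

lemma nonempty (hQ : IsCompOf G S Q) : Q.Nonempty :=
  Set.nonempty_coe_sort.mp hQ.2.1.nonempty

lemma setNbhd_subset (hQ : IsCompOf G S Q) : setNbhd G Q ⊆ S :=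
  fun s ⟨hsQ, a, haQ, has⟩ => by_contra fun hsS => hsQ (hQ.2.2 a haQ s hsS has)

lemma exists_not_adj_of_not_isClique (hS : G.IsClique S) (hQ : IsCompOf G S Q)
    (h : ¬ G.IsClique (Q ∪ setNbhd G Q)) :
    ∃ x ∈ Q, ∃ y ∈ Q ∪ setNbhd G Q, x ≠ y ∧ ¬ G.Adj x y ∧
      ∀ s ∈ setNbhd G Q, s = y ∨ G.Adj s y := by
  have hN : G.IsClique (setNbhd G Q) := hS.subset hQ.setNbhd_subset
  by_cases hc : ∃ s ∈ setNbhd G Q, ∃ t ∈ Q, ¬ G.Adj t s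
  · obtain ⟨s, hs, t, ht, hts⟩ := hc
    refine ⟨t, ht, s, Or.inr hs, fun h => hs.1 (h ▸ ht), hts, fun r hr => ?_⟩
    by_cases hrs : r = s
    exacts [Or.inl hrs, Or.inr (hN hr hs hrs)]
  push Not at hc
  simp only [isClique_iff, Set.Pairwise, not_forall] at h
  obtain ⟨u, hu, v, hv, huv, hnadj⟩ := h
  rcases hu with hu | hu <;> rcases hv with hv | hv
  · exact ⟨u, hu, v, Or.inl hv, huv, hnadj, fun s hs => Or.inr (hc s hs v hv).symm⟩
  · exact absurd (hc v hv u hu) hnadj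
  · exact absurd (hc u hu v hv).symm hnadj
  · exact absurd (hN hu hv huv) hnadj

end IsCompOf

theorem Chordal.exists_isSimplicial_of_isCompOf [Finite V] (hch : Chordal G) {S Q : Set V}
    (hS : G.IsClique S) (hQ : IsCompOf G S Q) : ∃ v ∈ Q, IsSimplicial G v := by
  induction h : Q.ncard using Nat.strong_induction_on generalizing S Q with
  | _ n ih =>
  by_cases hcl : G.IsClique (Q ∪ setNbhd G Q)
  · obtain ⟨v, hv⟩ := hQ.nonempty
    exact ⟨v, hv, isSimplicial_of_neighborSet_subset hcl (neighborSet_subset_union_setNbhd hv)⟩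
  obtain ⟨x, hx, y, hy, hxy, hadj, hyN⟩ := hQ.exists_not_adj_of_not_isClique hS hcl
  obtain ⟨A, -, hA⟩ :=
    exists_minimal_le_of_wellFoundedLT (G.Separates · x y) _ (separates_compl_pair hxy hadj)
  have hCQ := componentAvoiding_ssubset hx hy hyN hA.1
  obtain ⟨v, hv, hsimp⟩ := ih _ (h ▸ Set.ncard_lt_ncard hCQ)
    (hch.isClique_of_minimal_separates hA) (isCompOf_componentAvoiding hA.1.1) rfl
  exact ⟨v, hCQ.subset hv, hsimp⟩

end

theorem stmt10_general {V : Type*} [Fintype V] (G : SimpleGraph V)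
    (hch : Chordal G) (S : Set V) (hS : G.IsClique S) :
    ∀ Q : Set V, IsCompOf G S Q → ∃ v ∈ Q, IsSimplicial G v :=
  fun _ hQ => hch.exists_isSimplicial_of_isCompOf hS hQ

/-- If `G` is a connected chordal graph and `S` a clique with `V(G) ∖ S` nonempty,
then every connected component of `G − S` contains a simplicial vertex of `G`. -/
theorem stmt10 {V : Type*} [Fintype V] (G : SimpleGraph V)
    (hch : Chordal G) (hconn : G.Connected) (S : Set V) (hS : G.IsClique S)
    (hne : (Sᶜ : Set V).Nonempty) :
    ∀ Q : Set V, IsCompOf G S Q → ∃ v ∈ Q, IsSimplicial G v :=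
  stmt10_general G hch S hS
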